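/- Let E be a simplicial commutative k-algebra whose Moore complex satisfies NE_4 = 0. Then for all x_3, y_3 ∈ NE_3 the following identity holds in E_3: (s_2 d_3 x_3 − x_3) · (s_1 d_3 y_3 − s_2 d_3 y_3 + y_3) = 0. -/

import Mathlib

/-!
Put `a = s₂ x₃ - s₃ x₃` and `b = s₁ y₃ - s₂ y₃ + s₃ y₃` in `E₄`. The simplicial identities show
that `d₀, d₁, d₃` kill `a` and `d₂` kills `b`, so `a * b ∈ NE₄ = 0`, while the last faces `d₄ a`
and `d₄ b` are the two factors of the identity. Hence their product is `d₄ (a * b) = 0`.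
-/

/-- A simplicial commutative `k`-algebra: a family of commutative `k`-algebras
`obj n` together with face algebra homomorphisms `d n i : obj (n+1) →ₐ[k] obj n`
(representing `d_i : E_{n+1} → E_n`, `0 ≤ i ≤ n+1`) and degeneracy algebra
homomorphisms `s n i : obj n →ₐ[k] obj (n+1)` (representing
`s_i : E_n → E_{n+1}`, `0 ≤ i ≤ n`), satisfying the simplicial identities. -/
structure SimplicialCommAlg (k : Type*) [CommRing k]
    (obj : ℕ → Type*) [∀ n, CommRing (obj n)] [∀ n, Algebra k (obj n)] where
  d : (n : ℕ) → ℕ → (obj (n + 1) →ₐ[k] obj n)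
  s : (n : ℕ) → ℕ → (obj n →ₐ[k] obj (n + 1))
  dd : ∀ (n i j : ℕ), i < j → j ≤ n + 2 →
    (d n i).comp (d (n + 1) j) = (d n (j - 1)).comp (d (n + 1) i)
  ds_lt : ∀ (m i j : ℕ), i < j → j ≤ m + 1 →
    (d (m + 1) i).comp (s (m + 1) j) = (s m (j - 1)).comp (d m i)
  ds_self : ∀ (n j : ℕ), j ≤ n → (d n j).comp (s n j) = AlgHom.id k (obj n)
  ds_succ : ∀ (n j : ℕ), j ≤ n → (d n (j + 1)).comp (s n j) = AlgHom.id k (obj n)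
  ds_gt : ∀ (m i j : ℕ), j + 1 < i → i ≤ m + 2 →
    (d (m + 1) i).comp (s (m + 1) j) = (s m j).comp (d m (i - 1))
  ss : ∀ (n i j : ℕ), i ≤ j → j ≤ n →
    (s (n + 1) i).comp (s n j) = (s (n + 1) (j + 1)).comp (s n i)

namespace SimplicialCommAlg

variable {k : Type*} [CommRing k] {obj : ℕ → Type*} [∀ n, CommRing (obj n)]
  [∀ n, Algebra k (obj n)] (E : SimplicialCommAlg k obj)

theorem d_s_succ_of_le {m i j : ℕ} (hij : i ≤ j) (hj : j ≤ m) (x : obj (m + 1)) :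
    E.d (m + 1) i (E.s (m + 1) (j + 1) x) = E.s m j (E.d m i x) :=
  AlgHom.congr_fun (E.ds_lt m i (j + 1) (by omega) (by omega)) x

theorem d_s_self {n j : ℕ} (hj : j ≤ n) (x : obj n) : E.d n j (E.s n j x) = x :=
  AlgHom.congr_fun (E.ds_self n j hj) x

theorem d_succ_s {n j : ℕ} (hj : j ≤ n) (x : obj n) : E.d n (j + 1) (E.s n j x) = x :=
  AlgHom.congr_fun (E.ds_succ n j hj) x

theorem d_succ_s_of_lt {m i j : ℕ} (hji : j < i) (hi : i ≤ m + 1) (x : obj (m + 1)) :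
    E.d (m + 1) (i + 1) (E.s (m + 1) j x) = E.s m j (E.d m i x) :=
  AlgHom.congr_fun (E.ds_gt m (i + 1) j (by omega) (by omega)) x

theorem d_last_mul_d_last_eq_zero {n : ℕ}
    (hN : ∀ w : obj (n + 1), (∀ i ≤ n, E.d n i w = 0) → w = 0) {a b : obj (n + 1)}
    (hab : ∀ i ≤ n, E.d n i a = 0 ∨ E.d n i b = 0) :
    E.d n (n + 1) a * E.d n (n + 1) b = 0 := by
  have hmem : ∀ i ≤ n, E.d n i (a * b) = 0 := fun i hi => by
    rcases hab i hi with h | h <;> simp [map_mul, h]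
  rw [← map_mul, hN _ hmem, map_zero]

section Differences

variable {m : ℕ}

theorem d_s_sub_s_of_le {i : ℕ} (hi : i ≤ m) {x : obj (m + 2)} (hx : E.d (m + 1) i x = 0) :
    E.d (m + 2) i (E.s (m + 2) (m + 1) x - E.s (m + 2) (m + 2) x) = 0 := by
  rw [map_sub, E.d_s_succ_of_le (by omega) (by omega), E.d_s_succ_of_le (by omega) (by omega), hx,
    map_zero, map_zero, sub_zero]

theorem d_s_sub_s_self (x : obj (m + 2)) :
    E.d (m + 2) (m + 2) (E.s (m + 2) (m + 1) x - E.s (m + 2) (m + 2) x) = 0 := by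
  rw [map_sub, E.d_succ_s (by omega), E.d_s_self le_rfl, sub_self]

theorem d_last_s_sub_s (x : obj (m + 2)) :
    E.d (m + 2) (m + 3) (E.s (m + 2) (m + 1) x - E.s (m + 2) (m + 2) x) =
      E.s (m + 1) (m + 1) (E.d (m + 1) (m + 2) x) - x := by
  rw [map_sub, E.d_succ_s_of_lt (by omega) (by omega), E.d_succ_s le_rfl]

theorem d_alternating_s_eq_zero {y : obj (m + 2)} (hy : E.d (m + 1) (m + 1) y = 0) :
    E.d (m + 2) (m + 1)
      (E.s (m + 2) m y - E.s (m + 2) (m + 1) y + E.s (m + 2) (m + 2) y) = 0 := by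
  rw [map_add, map_sub, E.d_succ_s (by omega), E.d_s_self (by omega),
    E.d_s_succ_of_le (by omega) (by omega), hy, map_zero, sub_self, zero_add]

theorem d_last_alternating_s (y : obj (m + 2)) :
    E.d (m + 2) (m + 3)
      (E.s (m + 2) m y - E.s (m + 2) (m + 1) y + E.s (m + 2) (m + 2) y) =
      E.s (m + 1) m (E.d (m + 1) (m + 2) y) - E.s (m + 1) (m + 1) (E.d (m + 1) (m + 2) y) + y := by
  rw [map_add, map_sub, E.d_succ_s_of_lt (by omega) (by omega), E.d_succ_s_of_lt (by omega) (by omega),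
    E.d_succ_s le_rfl]

end Differences

end SimplicialCommAlg

theorem stmt_15 {k : Type*} [CommRing k] {obj : ℕ → Type*}
    [∀ n, CommRing (obj n)] [∀ n, Algebra k (obj n)]
    (E : SimplicialCommAlg k obj)
    (hNE4 : ∀ w : obj 4, E.d 3 0 w = 0 → E.d 3 1 w = 0 →
      E.d 3 2 w = 0 → E.d 3 3 w = 0 → w = 0)
    (x3 : obj 3) (hx3 : E.d 2 0 x3 = 0 ∧ E.d 2 1 x3 = 0 ∧ E.d 2 2 x3 = 0) (y3 : obj 3) (hy3 : E.d 2 0 y3 = 0 ∧ E.d 2 1 y3 = 0 ∧ E.d 2 2 y3 = 0) :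
    (E.s 2 2 (E.d 2 3 x3) - x3) *
      (E.s 2 1 (E.d 2 3 y3) - E.s 2 2 (E.d 2 3 y3) + y3) = 0 := by
  obtain ⟨hx0, hx1, -⟩ := hx3
  have hN : ∀ w : obj 4, (∀ i ≤ 3, E.d 3 i w = 0) → w = 0 := fun w hw =>
    hNE4 w (hw 0 (by norm_num)) (hw 1 (by norm_num)) (hw 2 (by norm_num)) (hw 3 (by norm_num))
  have hfaces : ∀ i ≤ 3, E.d 3 i (E.s 3 2 x3 - E.s 3 3 x3) = 0 ∨
      E.d 3 i (E.s 3 1 y3 - E.s 3 2 y3 + E.s 3 3 y3) = 0 := by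
    intro i hi
    interval_cases i
    · exact .inl (E.d_s_sub_s_of_le (m := 1) (by norm_num) hx0)
    · exact .inl (E.d_s_sub_s_of_le (m := 1) le_rfl hx1)
    · exact .inr (E.d_alternating_s_eq_zero (m := 1) hy3.2.2)
    · exact .inl (E.d_s_sub_s_self (m := 1) x3)
  have := E.d_last_mul_d_last_eq_zero hN hfaces
  rwa [E.d_last_s_sub_s (m := 1), E.d_last_alternating_s (m := 1)] at this
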